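/- arXiv:1607.05277 — 3 statements merged into one kernel-verified Lean document; each statement's English description precedes it below -/
import Mathlib

section
/- Let N be a positive integer and X an invertible n×n complex matrix with X^N = 1. For any n×n complex matrix E, define A := (1/N) ∑_{k=0}^{N-1} ∑_{p=0}^{k} X^{-p} E X^{p}. Then X^{-1} A X − A = ⟨E⟩ − E, where ⟨E⟩ := (1/N) ∑_{k=0}^{N-1} X^{-k} E X^{k}. In particular, if ⟨E⟩ = 0 then X^{-1} A X − A = −E. -/
/-!
Conjugation by `X` shifts the orbit `f p = X⁻ᵖ E Xᵖ` by one step, so `X⁻¹ A X - A` is an average of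
the telescoping sums `∑_{p ≤ k} (f (p + 1) - f p) = f (k + 1) - f 0`. Since `X ^ N = 1` makes the
orbit `N`-periodic, the average of the `f (k + 1)` is the average `⟨E⟩` of the `f k`, while `f 0 = E`.
-/

open Finset

section Telescoping

variable {M : Type*} [AddCommGroup M]

theorem sum_range_sum_range_succ_comp_succ_sub (f : ℕ → M) (N : ℕ) :
    ∑ k ∈ range N, ∑ p ∈ range (k + 1), f (p + 1) - ∑ k ∈ range N, ∑ p ∈ range (k + 1), f p
      = ∑ k ∈ range N, f (k + 1) - N • f 0 := by
  simp_rw [← sum_sub_distrib, sum_range_sub, sum_sub_distrib, sum_const, card_range]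

theorem sum_range_comp_succ_of_eq {f : ℕ → M} {N : ℕ} (hf : f N = f 0) :
    ∑ k ∈ range N, f (k + 1) = ∑ k ∈ range N, f k := by
  have h := sum_range_succ' f N
  rw [sum_range_succ, hf] at h
  exact add_right_cancel h.symm

theorem map_smul_sum_range_sum_range_succ_sub {K : Type*} [DivisionRing K] [Module K M]
    (T : M →ₗ[K] M) {f : ℕ → M} {N : ℕ} (hN : (N : K) ≠ 0)
    (hT : ∀ p, T (f p) = f (p + 1)) (hf : f N = f 0) :
    T ((N : K)⁻¹ • ∑ k ∈ range N, ∑ p ∈ range (k + 1), f p)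
        - (N : K)⁻¹ • ∑ k ∈ range N, ∑ p ∈ range (k + 1), f p
      = (N : K)⁻¹ • ∑ k ∈ range N, f k - f 0 := by
  simp only [map_smul, map_sum, hT]
  rw [← smul_sub, sum_range_sum_range_succ_comp_succ_sub, sum_range_comp_succ_of_eq hf, smul_sub,
    ← Nat.cast_smul_eq_nsmul K, smul_smul, inv_mul_cancel₀ hN, one_smul]

end Telescoping

theorem mul_mul_pow_mul_pow_mul {G : Type*} [Monoid G] (a b e : G) (p : ℕ) :
    a * (a ^ p * e * b ^ p) * b = a ^ (p + 1) * e * b ^ (p + 1) := by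
  simp only [pow_succ b, pow_succ' a, mul_assoc]

theorem stepOne_telescoping_identity_general
    (N n : ℕ) (hN : 0 < N)
    (X : Matrix (Fin n) (Fin n) ℂ) (hXN : X ^ N = 1)
    (E : Matrix (Fin n) (Fin n) ℂ)
    (A : Matrix (Fin n) (Fin n) ℂ)
    (hA : A = (N : ℂ)⁻¹ • ∑ k ∈ Finset.range N, ∑ p ∈ Finset.range (k + 1),
        X⁻¹ ^ p * E * X ^ p)
    (S : Matrix (Fin n) (Fin n) ℂ)
    (hS : S = (N : ℂ)⁻¹ • ∑ k ∈ Finset.range N, X⁻¹ ^ k * E * X ^ k) :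
    X⁻¹ * A * X - A = S - E ∧ (S = 0 → X⁻¹ * A * X - A = -E) := by
  have hperiodic : X⁻¹ ^ N * E * X ^ N = X⁻¹ ^ 0 * E * X ^ 0 := by
    simp [Matrix.inv_pow', hXN]
  have hidentity : X⁻¹ * A * X - A = S - E := by
    have h := map_smul_sum_range_sum_range_succ_sub (LinearMap.mulLeftRight ℂ (X⁻¹, X))
      (Nat.cast_ne_zero.mpr hN.ne') (mul_mul_pow_mul_pow_mul X⁻¹ X E) hperiodic
    simpa only [LinearMap.mulLeftRight_apply, ← hA, ← hS, pow_zero, one_mul, mul_one] using h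
  exact ⟨hidentity, fun hS0 => by rw [hidentity, hS0, zero_sub]⟩

/-- For a positive integer `N`, an invertible `n × n` complex matrix `X` with
`X ^ N = 1`, and any matrix `E`, the matrix
`A := (1/N) ∑_{k=0}^{N-1} ∑_{p=0}^{k} X⁻ᵖ E Xᵖ` satisfies the telescoping identity
`X⁻¹ A X - A = ⟨E⟩ - E`, where `⟨E⟩ := (1/N) ∑_{k=0}^{N-1} X⁻ᵏ E Xᵏ`.
In particular, if `⟨E⟩ = 0` then `X⁻¹ A X - A = -E`. -/
theorem stepOne_telescoping_identity
    (N n : ℕ) (hN : 0 < N)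
    (X : Matrix (Fin n) (Fin n) ℂ) (hXunit : IsUnit X) (hXN : X ^ N = 1)
    (E : Matrix (Fin n) (Fin n) ℂ)
    (A : Matrix (Fin n) (Fin n) ℂ)
    (hA : A = (N : ℂ)⁻¹ • ∑ k ∈ Finset.range N, ∑ p ∈ Finset.range (k + 1),
        X⁻¹ ^ p * E * X ^ p)
    (S : Matrix (Fin n) (Fin n) ℂ)
    (hS : S = (N : ℂ)⁻¹ • ∑ k ∈ Finset.range N, X⁻¹ ^ k * E * X ^ k) :
    X⁻¹ * A * X - A = S - E ∧ (S = 0 → X⁻¹ * A * X - A = -E) :=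
  stepOne_telescoping_identity_general N n hN X hXN E A hA S hS
end

section
/- Let N be a positive integer, X an invertible n×n complex matrix with X^N = 1, and let D, E be n×n complex matrices with ⟨E⟩ := (1/N) ∑_{k=0}^{N-1} X^{-k} E X^{k} = 0. Set A := (1/N) ∑_{k=0}^{N-1} ∑_{p=0}^{k} X^{-p} E X^{p}. Let 0 < a < 1/2, and let V : ℝ → (n×n complex matrices) be integrable on [0,1] with ∫₀¹ V(t) dt = 0. Define H′ : [0,1] → (n×n complex matrices) by H′(t) = −(1/a)·A for 0 ≤ t < a, H′(t) = (1/(1−2a))·(D + E + V((t−a)/(1−2a))) for a ≤ t < 1−a, and H′(t) = (1/a)·X^{-1} A X for 1−a ≤ t ≤ 1. Then ∫₀¹ H′(t) dt = D. -/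
open scoped Matrix.Norms.L2Operator

open MeasureTheory

/-!
The kicks `-A/a` and `X⁻¹AX/a` each last for time `a`, so they contribute `-A` and `X⁻¹AX`,
while the time-rescaled middle piece contributes its original integral `∫₀¹ (D + E + V) = D + E`.
Everything therefore reduces to the identity `X⁻¹AX = A - E`: conjugation by `X` shifts each
inner sum `∑_{p ≤ k} X⁻ᵖEXᵖ` of `A` by one index, the differences telescope, and `⟨E⟩ = 0`
together with `X ^ N = 1` kills what remains.
-/

theorem Finset.sum_range_sum_range_succ_sub_of_sum_eq_zero {M : Type*} [AddCommGroup M] (g : ℕ → M)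
    (N : ℕ) (hgN : g N = g 0) (hsum : ∑ k ∈ range N, g k = 0) :
    ∑ k ∈ range N, ∑ p ∈ range (k + 1), (g (p + 1) - g p) = -(N • g 0) := by
  have hshift : ∑ k ∈ range N, g (k + 1) = 0 := by
    have h := sum_range_succ' g N
    rw [sum_range_succ, hsum, hgN, zero_add] at h
    exact add_eq_right.mp h.symm
  simp only [sum_range_sub g, sum_sub_distrib, hshift, sum_const, card_range, zero_sub]

open Finset in
theorem Matrix.inv_mul_mul_eq_sub_of_sum_conj_eq_zero {m K : Type*} [Fintype m] [DecidableEq m]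
    [Field K] [CharZero K] {N : ℕ} (hN : N ≠ 0) {X : Matrix m m K} (hXN : X ^ N = 1)
    (E : Matrix m m K) (hE : ∑ k ∈ range N, X⁻¹ ^ k * E * X ^ k = 0) :
    X⁻¹ * ((N : K)⁻¹ • ∑ k ∈ range N, ∑ p ∈ range (k + 1), X⁻¹ ^ p * E * X ^ p) * X
      = (N : K)⁻¹ • ∑ k ∈ range N, ∑ p ∈ range (k + 1), X⁻¹ ^ p * E * X ^ p - E := by
  set g : ℕ → Matrix m m K := fun p ↦ X⁻¹ ^ p * E * X ^ p
  have hconj (p : ℕ) : X⁻¹ * g p * X = g (p + 1) := by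
    simp only [g, pow_succ' X⁻¹, pow_succ X, mul_assoc]
  have hgN : g N = g 0 := by simp [g, Matrix.inv_pow', hXN]
  have hshift : ∑ k ∈ range N, ∑ p ∈ range (k + 1), g (p + 1)
      = ∑ k ∈ range N, ∑ p ∈ range (k + 1), g p - N • E := by
    rw [sub_eq_add_neg, ← show g 0 = E by simp [g],
      ← sum_range_sum_range_succ_sub_of_sum_eq_zero g N hgN hE, ← sum_add_distrib]
    simp only [← sum_add_distrib, add_sub_cancel]
  calc X⁻¹ * ((N : K)⁻¹ • ∑ k ∈ range N, ∑ p ∈ range (k + 1), g p) * X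
      = (N : K)⁻¹ • ∑ k ∈ range N, ∑ p ∈ range (k + 1), g (p + 1) := by
        simp only [Matrix.mul_smul, Matrix.smul_mul, mul_sum, sum_mul, hconj]
    _ = (N : K)⁻¹ • ∑ k ∈ range N, ∑ p ∈ range (k + 1), g p - E := by
        rw [hshift, smul_sub, ← Nat.cast_smul_eq_nsmul K, smul_smul,
          inv_mul_cancel₀ (Nat.cast_ne_zero.mpr hN), one_smul]

open Set in
theorem intervalIntegral.integral_eq_add_add_of_eqOn_uIoo {E : Type*} [NormedAddCommGroup E]
    [NormedSpace ℝ E] {μ : Measure ℝ} [NullSingletonClass μ] {f g₁ g₂ g₃ : ℝ → E}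
    {p q r s : ℝ} (h₁ : EqOn f g₁ (uIoo p q)) (h₂ : EqOn f g₂ (uIoo q r))
    (h₃ : EqOn f g₃ (uIoo r s)) (hg₁ : IntervalIntegrable g₁ μ p q)
    (hg₂ : IntervalIntegrable g₂ μ q r) (hg₃ : IntervalIntegrable g₃ μ r s) :
    ∫ x in p..s, f x ∂μ
      = (∫ x in p..q, g₁ x ∂μ) + (∫ x in q..r, g₂ x ∂μ) + ∫ x in r..s, g₃ x ∂μ := by
  have hf₁ := hg₁.congr_uIoo h₁.symm
  have hf₂ := hg₂.congr_uIoo h₂.symm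
  rw [← integral_add_adjacent_intervals (hf₁.trans hf₂) (hg₃.congr_uIoo h₃.symm),
    ← integral_add_adjacent_intervals hf₁ hf₂, integral_congr_uIoo h₁, integral_congr_uIoo h₂,
    integral_congr_uIoo h₃]

theorem IntervalIntegrable.comp_sub_div {E : Type*} [NormedAddCommGroup E] {f : ℝ → E}
    (hf : IntervalIntegrable f volume 0 1) (a c : ℝ) :
    IntervalIntegrable (fun t ↦ f ((t - a) / c)) volume a (a + c) := by
  have h := (hf.comp_mul_right (c := c⁻¹)).comp_sub_right a
  simpa [div_eq_mul_inv, add_comm c] using h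

theorem intervalIntegral.integral_inv_smul_comp_sub_div {E : Type*} [NormedAddCommGroup E]
    [NormedSpace ℝ E] (f : ℝ → E) (p : ℝ) {c : ℝ} (hc : c ≠ 0) :
    ∫ t in p..p + c, c⁻¹ • f ((t - p) / c) = ∫ s in (0 : ℝ)..1, f s := by
  simp only [integral_smul, sub_div, integral_comp_div_sub f hc, sub_self, add_div, div_self hc,
    add_sub_cancel_left, smul_smul, inv_mul_cancel₀ hc, one_smul]

theorem integral_kick_rescale_kick {E : Type*} [NormedAddCommGroup E] [NormedSpace ℝ E]
    [CompleteSpace E] {a : ℝ} (ha : 0 < a) (ha' : a < 1 / 2) (B₁ B₂ : E) {G : ℝ → E}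
    (hG : IntervalIntegrable G volume 0 1) {H : ℝ → E}
    (hH : ∀ t ∈ Set.Icc (0 : ℝ) 1, H t = if t < a then a⁻¹ • B₁
      else if t < 1 - a then (1 - 2 * a)⁻¹ • G ((t - a) / (1 - 2 * a)) else a⁻¹ • B₂) :
    ∫ t in (0 : ℝ)..1, H t = B₁ + (∫ s in (0 : ℝ)..1, G s) + B₂ := by
  have hb : 1 - 2 * a ≠ 0 := by linarith
  have hend : 1 - a = a + (1 - 2 * a) := by ring
  have hH₁ : Set.EqOn H (fun _ ↦ a⁻¹ • B₁) (Set.uIoo 0 a) := by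
    rw [Set.uIoo_of_le ha.le]
    exact fun t ⟨ht₀, hta⟩ ↦ by rw [hH t ⟨ht₀.le, by linarith⟩, if_pos hta]
  have hH₂ : Set.EqOn H (fun t ↦ (1 - 2 * a)⁻¹ • G ((t - a) / (1 - 2 * a)))
      (Set.uIoo a (1 - a)) := by
    rw [Set.uIoo_of_le (by linarith)]
    exact fun t ⟨hat, hta'⟩ ↦ by
      rw [hH t ⟨by linarith, by linarith⟩, if_neg (not_lt.mpr hat.le), if_pos hta']
  have hH₃ : Set.EqOn H (fun _ ↦ a⁻¹ • B₂) (Set.uIoo (1 - a) 1) := by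
    rw [Set.uIoo_of_le (by linarith)]
    exact fun t ⟨ha't, ht₁⟩ ↦ by
      rw [hH t ⟨by linarith, ht₁.le⟩, if_neg (by linarith), if_neg (not_lt.mpr ha't.le)]
  have hG' : IntervalIntegrable (fun t ↦ (1 - 2 * a)⁻¹ • G ((t - a) / (1 - 2 * a)))
      volume a (1 - a) := by
    rw [hend]
    exact (hG.comp_sub_div a _).smul (1 - 2 * a)⁻¹
  rw [intervalIntegral.integral_eq_add_add_of_eqOn_uIoo hH₁ hH₂ hH₃ intervalIntegrable_const hG'
      intervalIntegrable_const, hend, intervalIntegral.integral_inv_smul_comp_sub_div G a hb,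
    ← hend]
  simp only [intervalIntegral.integral_const, sub_zero, sub_sub_cancel, smul_smul,
    mul_inv_cancel₀ ha.ne', one_smul]

theorem stepOne_time_average_general
    (N n : ℕ) (hN : 0 < N)
    (X : Matrix (Fin n) (Fin n) ℂ) (hXN : X ^ N = 1)
    (D E : Matrix (Fin n) (Fin n) ℂ)
    (hE : (N : ℂ)⁻¹ • ∑ k ∈ Finset.range N, X⁻¹ ^ k * E * X ^ k = 0)
    (A : Matrix (Fin n) (Fin n) ℂ)
    (hA : A = (N : ℂ)⁻¹ • ∑ k ∈ Finset.range N, ∑ p ∈ Finset.range (k + 1),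
        X⁻¹ ^ p * E * X ^ p)
    (a : ℝ) (ha : 0 < a) (ha' : a < 1 / 2)
    (V : ℝ → Matrix (Fin n) (Fin n) ℂ)
    (hV : IntervalIntegrable V volume 0 1)
    (hVavg : ∫ t in (0:ℝ)..1, V t = 0)
    (H' : ℝ → Matrix (Fin n) (Fin n) ℂ)
    (hH' : ∀ t ∈ Set.Icc (0:ℝ) 1,
        H' t = if t < a then a⁻¹ • (-A)
          else if t < 1 - a then (1 - 2 * a)⁻¹ • (D + E + V ((t - a) / (1 - 2 * a)))
          else a⁻¹ • (X⁻¹ * A * X)) :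
    ∫ t in (0:ℝ)..1, H' t = D := by
  have hconj : X⁻¹ * A * X = A - E := by
    have hNC : (N : ℂ)⁻¹ ≠ 0 := by simpa using hN.ne'
    rw [hA]
    exact Matrix.inv_mul_mul_eq_sub_of_sum_conj_eq_zero hN.ne' hXN E
      ((smul_eq_zero_iff_right hNC).mp hE)
  have hG : IntervalIntegrable (fun s ↦ D + E + V s) volume 0 1 := intervalIntegrable_const.add hV
  rw [integral_kick_rescale_kick ha ha' (-A) (X⁻¹ * A * X) hG hH',
    intervalIntegral.integral_add intervalIntegrable_const hV, hVavg, hconj]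
  simp only [intervalIntegral.integral_const, sub_zero, one_smul, add_zero]
  abel

/-- "Step One": Let `X` be an invertible matrix with `X ^ N = 1`, let `E` have
vanishing symmetrization `⟨E⟩ = 0`, and let `A := (1/N) ∑_{k<N} ∑_{p≤k} X⁻ᵖ E Xᵖ`.
For `0 < a < 1/2` and `V` integrable on `[0,1]` with `∫₀¹ V = 0`, the piecewise Hamiltonian
`H′(t) = -(1/a)A` on `[0,a)`, `H′(t) = (1/(1-2a))(D + E + V((t-a)/(1-2a)))` on `[a, 1-a)`,
`H′(t) = (1/a) X⁻¹ A X` on `[1-a, 1]` has time average `∫₀¹ H′(t) dt = D`. -/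
theorem stepOne_time_average
    (N n : ℕ) (hN : 0 < N)
    (X : Matrix (Fin n) (Fin n) ℂ) (hXunit : IsUnit X) (hXN : X ^ N = 1)
    (D E : Matrix (Fin n) (Fin n) ℂ)
    (hE : (N : ℂ)⁻¹ • ∑ k ∈ Finset.range N, X⁻¹ ^ k * E * X ^ k = 0)
    (A : Matrix (Fin n) (Fin n) ℂ)
    (hA : A = (N : ℂ)⁻¹ • ∑ k ∈ Finset.range N, ∑ p ∈ Finset.range (k + 1),
        X⁻¹ ^ p * E * X ^ p)
    (a : ℝ) (ha : 0 < a) (ha' : a < 1 / 2)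
    (V : ℝ → Matrix (Fin n) (Fin n) ℂ)
    (hV : IntervalIntegrable V volume 0 1)
    (hVavg : ∫ t in (0:ℝ)..1, V t = 0)
    (H' : ℝ → Matrix (Fin n) (Fin n) ℂ)
    (hH' : ∀ t ∈ Set.Icc (0:ℝ) 1,
        H' t = if t < a then a⁻¹ • (-A)
          else if t < 1 - a then (1 - 2 * a)⁻¹ • (D + E + V ((t - a) / (1 - 2 * a)))
          else a⁻¹ • (X⁻¹ * A * X)) :
    ∫ t in (0:ℝ)..1, H' t = D :=
  stepOne_time_average_general N n hN X hXN D E hE A hA a ha ha' V hV hVavg H' hH'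
end

section
/- Let X, D, σ be n×n complex matrices with X² = 1, X·D = D·X, and exp(−iTD)·σ·exp(iTD) = σ for a real number T. Let t be a real number and set ρ := t·σ + (1−t)·X·σ·X. If the Floquet operator Ũ := X·exp(−iTD) satisfies Ũ·ρ·Ũ⁻¹ = ρ and σ ≠ X·σ·X, then t = 1/2. -/
/-!
Conjugation by the Floquet operator `Ũ = X e^{-iTD}` is a linear map exchanging `σ` and `XσX`:
`e^{-iTD}` fixes `σ`, and it commutes with the involution `X`. Hence it sends
`tσ + (1-t)XσX` to `tXσX + (1-t)σ`, and a fixed point of this form satisfies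
`(2t - 1)(σ - XσX) = 0`, which forces `t = 1/2` as soon as `σ ≠ XσX`.
-/

open NormedSpace

theorem eq_one_half_of_map_swap {K M : Type*} [Field K] [AddCommGroup M] [Module K M]
    (f : M →ₗ[K] M) {a b : M} (ha : f a = b) (hb : f b = a) (hab : a ≠ b) {t : K}
    (ht : f (t • a + (1 - t) • b) = t • a + (1 - t) • b) : t = 1 / 2 := by
  rw [map_add, map_smul, map_smul, ha, hb] at ht
  have hsmul : (2 * t - 1) • (a - b) = 0 := by
    calc (2 * t - 1) • (a - b) = (t • a + (1 - t) • b) - (t • b + (1 - t) • a) := by module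
      _ = 0 := by rw [ht, sub_self]
  have h2t : 2 * t - 1 = 0 := (smul_eq_zero.mp hsmul).resolve_right (sub_ne_zero.mpr hab)
  exact eq_one_div_of_mul_eq_one_left (by linear_combination h2t)

theorem mul_mul_conj_involution {M : Type*} [Monoid M] {X E F : M} (hXX : X * X = 1)
    (hXE : Commute X E) (hXF : Commute X F) (a : M) :
    X * E * (X * a * X) * (F * X) = E * a * F := by
  calc X * E * (X * a * X) * (F * X) = X * (E * X) * a * (X * F) * X := by
        simp only [mul_assoc]
    _ = (X * X) * (E * a * F) * (X * X) := by
        rw [← hXE.eq, hXF.eq]; simp only [mul_assoc]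
    _ = E * a * F := by rw [hXX, one_mul, mul_one]

theorem Matrix.exp_neg_mul_exp {m 𝔸 : Type*} [Fintype m] [DecidableEq m] [NormedCommRing 𝔸]
    [NormedAlgebra ℚ 𝔸] [CompleteSpace 𝔸] (A : Matrix m m 𝔸) : exp (-A) * exp A = 1 := by
  rw [Matrix.exp_neg, Matrix.nonsing_inv_mul _ ((Matrix.isUnit_iff_isUnit_det _).mp
    (Matrix.isUnit_exp A))]

/-- Let `X, D, σ` be matrices with `X² = 1`, `XD = DX`, and
`exp(-iTD) σ exp(iTD) = σ`.  If `ρ := t σ + (1-t) X σ X` is a steady state of the Floquet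
operator `Ũ := X exp(-iTD)`, i.e. `Ũ ρ Ũ⁻¹ = ρ`, and `σ ≠ X σ X`, then `t = 1/2`. -/
theorem floquet_steady_state_is_symmetric_mixture
    (n : ℕ) (X D σ : Matrix (Fin n) (Fin n) ℂ)
    (hX2 : X ^ 2 = 1)
    (hXD : X * D = D * X)
    (T : ℝ)
    (hσ : NormedSpace.exp ((-(Complex.I * (T : ℂ))) • D) * σ *
        NormedSpace.exp ((Complex.I * (T : ℂ)) • D) = σ)
    (t : ℝ)
    (ρ : Matrix (Fin n) (Fin n) ℂ)
    (hρ : ρ = (t : ℂ) • σ + ((1 : ℂ) - (t : ℂ)) • (X * σ * X))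
    (hsteady : (X * NormedSpace.exp ((-(Complex.I * (T : ℂ))) • D)) * ρ *
        (X * NormedSpace.exp ((-(Complex.I * (T : ℂ))) • D))⁻¹ = ρ)
    (hSB : σ ≠ X * σ * X) :
    t = 1 / 2 := by
  set c : ℂ := Complex.I * T
  have hXX : X * X = 1 := by rw [← sq, hX2]
  have hXD' : Commute X D := hXD
  have hXE : Commute X (exp ((-c) • D)) := (hXD'.smul_right _).exp_right
  have hXF : Commute X (exp (c • D)) := (hXD'.smul_right _).exp_right
  have hinv : (X * exp ((-c) • D))⁻¹ = exp (c • D) * X := by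
    refine Matrix.inv_eq_right_inv ?_
    rw [mul_assoc, ← mul_assoc (exp _), neg_smul, Matrix.exp_neg_mul_exp, one_mul, hXX]
  rw [hinv, hρ] at hsteady
  have hσ_swap : X * exp ((-c) • D) * σ * (exp (c • D) * X) = X * σ * X := by
    conv_rhs => rw [← hσ]
    simp only [mul_assoc]
  have ht : (t : ℂ) = 1 / 2 :=
    eq_one_half_of_map_swap (.mulLeftRight ℂ (X * exp ((-c) • D), exp (c • D) * X))
      hσ_swap ((mul_mul_conj_involution hXX hXE hXF σ).trans hσ) hSB hsteady
  exact Complex.ofReal_injective (by simpa using ht)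
end
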